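/- Subformula principle for normal M⊃ derivations: if Π is a normal natural deduction derivation of α from open assumptions δ₁,…,δ_m, then every formula occurring in Π is a subformula of α or of some δ_i. -/
import Mathlib


inductive Formula where
  | atom : ℕ → Formula
  | imp : Formula → Formula → Formula
deriving DecidableEq

/-- The subformula relation. -/
inductive Subf : Formula → Formula → Prop
  | refl (φ : Formula) : Subf φ φ
  | imp_left {a φ ψ : Formula} : Subf a φ → Subf a (Formula.imp φ ψ)
  | imp_right {a φ ψ : Formula} : Subf a ψ → Subf a (Formula.imp φ ψ)

/-- Natural deduction proof trees for `M⊃`, indexed by their conclusion. -/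
inductive Deriv : Formula → Type
  | hyp (φ : Formula) : Deriv φ
  | elim {φ ψ : Formula} : Deriv φ → Deriv (Formula.imp φ ψ) → Deriv ψ
  | intro (φ : Formula) {ψ : Formula} : Deriv ψ → Deriv (Formula.imp φ ψ)

/-- The open assumptions of a derivation (⊃-Intro discharges its antecedent). -/
def Deriv.assumptions : {φ : Formula} → Deriv φ → Finset Formula
  | _, .hyp φ => {φ}
  | _, .elim d e => d.assumptions ∪ e.assumptions
  | _, .intro φ d => d.assumptions \ {φ}

/-- Whether a derivation ends with an ⊃-Intro. -/
def Deriv.isIntro : {φ : Formula} → Deriv φ → Bool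
  | _, .intro _ _ => true
  | _, _ => false

/-- A derivation is normal if no formula occurrence is at the same time the
conclusion of an ⊃-Intro and the major premise of an ⊃-Elim. -/
def Deriv.Normal : {φ : Formula} → Deriv φ → Prop
  | _, .hyp _ => True
  | _, .elim d e => d.Normal ∧ e.Normal ∧ e.isIntro = false
  | _, .intro _ d => d.Normal

/-- The set of formulas occurring in a derivation. -/
def Deriv.formulas : {φ : Formula} → Deriv φ → Finset Formula
  | _, .hyp φ => {φ}
  | _, @Deriv.elim _ ψ d e => insert ψ (d.formulas ∪ e.formulas)
  | _, @Deriv.intro φ ψ d => insert (Formula.imp φ ψ) d.formulas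

theorem Subf.trans {a b c : Formula} (h1 : Subf a b) (h2 : Subf b c) : Subf a c := by
  induction h2 with
  | refl => exact h1
  | imp_left _ ih => exact Subf.imp_left ih
  | imp_right _ ih => exact Subf.imp_right ih

/-- A normal derivation not ending in ⊃-Intro has its conclusion a subformula
of some open assumption. -/
theorem elim_part {α : Formula} (d : Deriv α) (hd : d.Normal)
    (hni : d.isIntro = false) : ∃ δ ∈ d.assumptions, Subf α δ := by
  induction d with
  | hyp φ => exact ⟨φ, by simp [Deriv.assumptions], Subf.refl φ⟩
  | @elim φ ψ d e _ ihe =>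
    obtain ⟨h1, h2, h3⟩ := hd
    obtain ⟨δ, hδ, hs⟩ := ihe h2 h3
    exact ⟨δ, by simp [Deriv.assumptions]; right; exact hδ,
      Subf.trans (Subf.imp_right (Subf.refl ψ)) hs⟩
  | intro φ d => simp [Deriv.isIntro] at hni

/-- Subformula principle for normal `M⊃` derivations: every formula occurring
in a normal derivation of `α` from open assumptions `δ₁, …, δ_m` is a
subformula of `α` or of some `δᵢ`. -/
theorem subformula_principle {α : Formula} (d : Deriv α) (hd : d.Normal) :
    ∀ β ∈ d.formulas, Subf β α ∨ ∃ δ ∈ d.assumptions, Subf β δ := by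
  induction d with
  | hyp φ =>
    intro β hβ
    simp [Deriv.formulas] at hβ
    subst hβ
    exact Or.inl (Subf.refl _)
  | @elim φ ψ d e ihd ihe =>
    obtain ⟨h1, h2, h3⟩ := hd
    obtain ⟨δ, hδ, hs⟩ := elim_part e h2 h3
    have hδ' : δ ∈ (Deriv.elim d e).assumptions := by
      simp [Deriv.assumptions]; right; exact hδ
    intro β hβ
    simp [Deriv.formulas] at hβ
    rcases hβ with rfl | hβ | hβ
    · exact Or.inr ⟨δ, hδ', Subf.trans (Subf.imp_right (Subf.refl _)) hs⟩
    · rcases ihd h1 β hβ with h | ⟨δ', hδ'', hs'⟩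
      · exact Or.inr ⟨δ, hδ', Subf.trans (Subf.imp_left h) hs⟩
      · exact Or.inr ⟨δ', by simp [Deriv.assumptions]; left; exact hδ'', hs'⟩
    · rcases ihe h2 β hβ with h | ⟨δ', hδ'', hs'⟩
      · exact Or.inr ⟨δ, hδ', Subf.trans h hs⟩
      · exact Or.inr ⟨δ', by simp [Deriv.assumptions]; right; exact hδ'', hs'⟩
  | @intro φ ψ d ihd =>
    intro β hβ
    simp [Deriv.formulas] at hβ
    rcases hβ with rfl | hβ
    · exact Or.inl (Subf.refl _)
    · rcases ihd hd β hβ with h | ⟨δ, hδ, hs⟩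
      · exact Or.inl (Subf.imp_right h)
      · by_cases hφ : δ = φ
        · subst hφ; exact Or.inl (Subf.imp_left hs)
        · exact Or.inr ⟨δ, by simp [Deriv.assumptions, hδ, hφ], hs⟩
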